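/- If a formula φ is E′-valid and p₁, …, pₙ lists all the atoms occurring in φ, then the formula ((¬¬p₁ → p₁) ∧ … ∧ (¬¬pₙ → pₙ)) → φ is intuitionistically valid. -/

import Mathlib

/- Formalization of Lorenzen dialogue games, following Felscher's presentation.

   Propositional formulas are built from atoms using ¬, ∧, ∨, →.  A dialogue
   for a formula φ is a sequence of moves beginning with Proponent (P)
   asserting φ at position 0, with O moving at odd positions and P at even
   positions.  Each later move attacks or defends an earlier move of the other
   player, according to the particle rules.  Structural rules (D10, D11, D12,
   D13, E, and the variants D10*, D10′) constrain dialogues further.  P wins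
   if P made the last move and no moves are available to O; φ is S-valid if P
   has an S-winning strategy for φ. -/

namespace LorenzenDialogues

/-- Propositional formulas: atoms, ¬, ∧, ∨, →. -/
inductive Formula : Type
  | atom : ℕ → Formula
  | neg  : Formula → Formula
  | and  : Formula → Formula → Formula
  | or   : Formula → Formula → Formula
  | imp  : Formula → Formula → Formula
deriving DecidableEq

/-- Statements: formulas together with the symbolic attacks `?`, `∧_L`, `∧_R`. -/
inductive Statement : Type
  | form  : Formula → Statement
  | qmark : Statement
  | andL  : Statement
  | andR  : Statement
deriving DecidableEq

/-- Particle rules, attack part: which statements attack which formulas. -/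
inductive Attacks : Statement → Formula → Prop
  | andL (a b : Formula) : Attacks .andL (.and a b)
  | andR (a b : Formula) : Attacks .andR (.and a b)
  | qmark (a b : Formula) : Attacks .qmark (.or a b)
  | imp (a b : Formula) : Attacks (.form a) (.imp a b)
  | neg (a : Formula) : Attacks (.form a) (.neg a)

/-- Particle rules, defense part: `Defends χ a s` means `s` is a permitted
    defense of the formula `χ` against the attack `a`.  (A negation admits
    no defense.) -/
inductive Defends : Formula → Statement → Statement → Prop
  | andL (a b : Formula) : Defends (.and a b) .andL (.form a)
  | andR (a b : Formula) : Defends (.and a b) .andR (.form b)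
  | orL (a b : Formula) : Defends (.or a b) .qmark (.form a)
  | orR (a b : Formula) : Defends (.or a b) .qmark (.form b)
  | imp (a b : Formula) : Defends (.imp a b) (.form a) (.form b)

/-- A move: a statement, a flag recording whether it is an attack (`true`)
    or a defense (`false`), and the position of the earlier move it attacks,
    resp. the earlier attack it defends against. -/
structure Move : Type where
  statement : Statement
  isAttack : Bool
  ref : ℕ
deriving DecidableEq

/-- A dialogue: the initial formula asserted by P at position 0, followed by
    the list of later moves (the move at list index `i` occupies position
    `i + 1`; O moves at odd positions, P at even positions). -/
structure Dialogue : Type where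
  initial : Formula
  moves : List Move

/-- The statement asserted at position `n` (if any). -/
def Dialogue.stmtAt (d : Dialogue) (n : ℕ) : Option Statement :=
  if n = 0 then some (.form d.initial) else (d.moves[n - 1]?).map Move.statement

/-- The move at position `n ≥ 1` (if any); position 0 is the initial assertion,
    not a move. -/
def Dialogue.moveAt (d : Dialogue) (n : ℕ) : Option Move :=
  if n = 0 then none else d.moves[n - 1]?

/-- The move `m`, played at position `n ≥ 1`, is permitted by the particle
    rules: it refers to an earlier position of the other player; if it is an
    attack, it attacks a formula asserted there, and if it is a defense, it
    responds to an attack played there, as the particle rules prescribe. -/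
def MoveOK (d : Dialogue) (n : ℕ) (m : Move) : Prop :=
  m.ref < n ∧ m.ref % 2 ≠ n % 2 ∧
    (m.isAttack = true →
      ∃ ψ, d.stmtAt m.ref = some (.form ψ) ∧ Attacks m.statement ψ) ∧
    (m.isAttack = false →
      ∃ a χ, d.moveAt m.ref = some a ∧ a.isAttack = true ∧
        d.stmtAt a.ref = some (.form χ) ∧ Defends χ a.statement m.statement)

/-- The dialogue adheres to the particle rules (every move is legal). -/
def ParticleOK (d : Dialogue) : Prop :=
  ∀ i m, d.moves[i]? = some m → MoveOK d (i + 1) m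

/-- Position `n` carries a defense of the attack made at position `r`. -/
def IsDefenseOf (d : Dialogue) (n r : ℕ) : Prop :=
  ∃ m, d.moveAt n = some m ∧ m.isAttack = false ∧ m.ref = r

/-- Position `n` carries an attack on the assertion made at position `r`. -/
def IsAttackOn (d : Dialogue) (n r : ℕ) : Prop :=
  ∃ m, d.moveAt n = some m ∧ m.isAttack = true ∧ m.ref = r

/-- Position `n` carries an attack. -/
def IsAttackPos (d : Dialogue) (n : ℕ) : Prop :=
  ∃ m, d.moveAt n = some m ∧ m.isAttack = true

/-- The attack at position `r` is still open (no defense against it has yet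
    been played) before position `k`. -/
def OpenAt (d : Dialogue) (r k : ℕ) : Prop :=
  IsAttackPos d r ∧ ¬ ∃ j, j < k ∧ IsDefenseOf d j r

/-- (D10) P may assert an atomic formula only after it has been asserted by O
    before. -/
def D10 (d : Dialogue) : Prop :=
  ∀ n p, n % 2 = 0 → d.stmtAt n = some (.form (.atom p)) →
    ∃ j, j < n ∧ j % 2 = 1 ∧ d.stmtAt j = some (.form (.atom p))

/-- (D10*) P may assert an atom `p` only if O has asserted `p` or `¬p`
    before. -/
def D10star (d : Dialogue) : Prop :=
  ∀ n p, n % 2 = 0 → d.stmtAt n = some (.form (.atom p)) →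
    ∃ j, j < n ∧ j % 2 = 1 ∧
      (d.stmtAt j = some (.form (.atom p)) ∨
        d.stmtAt j = some (.form (.neg (.atom p))))

/-- (D10′) P may assert an atom `p` only if O has asserted `p` or `¬¬p`
    before. -/
def D10prime (d : Dialogue) : Prop :=
  ∀ n p, n % 2 = 0 → d.stmtAt n = some (.form (.atom p)) →
    ∃ j, j < n ∧ j % 2 = 1 ∧
      (d.stmtAt j = some (.form (.atom p)) ∨
        d.stmtAt j = some (.form (.neg (.neg (.atom p)))))

/-- (D11) When defending, only the most recent open attack may be responded
    to: the attack defended against is open, and no strictly more recent open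
    attack (against the same player) exists. -/
def D11 (d : Dialogue) : Prop :=
  ∀ n r, IsDefenseOf d n r →
    OpenAt d r n ∧ ¬ ∃ r', r < r' ∧ r' < n ∧ r' % 2 = r % 2 ∧ OpenAt d r' n

/-- (D12) An attack may be answered at most once. -/
def D12 (d : Dialogue) : Prop :=
  ∀ n₁ n₂ r, IsDefenseOf d n₁ r → IsDefenseOf d n₂ r → n₁ = n₂

/-- (D13) A P-assertion (made at an even position) may be attacked at most
    once. -/
def D13 (d : Dialogue) : Prop :=
  ∀ n₁ n₂ r, r % 2 = 0 → IsAttackOn d n₁ r → IsAttackOn d n₂ r → n₁ = n₂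

/-- (E) O can react only upon the immediately preceding P-statement. -/
def ERule (d : Dialogue) : Prop :=
  ∀ n m, n % 2 = 1 → d.moveAt n = some m → m.ref = n - 1

/-- A ruleset is a set of structural rules, i.e. a predicate on dialogues. -/
def Ruleset := Dialogue → Prop

/-- Ruleset D = {D10, D11, D12, D13}. -/
def rulesetD : Ruleset := fun d => D10 d ∧ D11 d ∧ D12 d ∧ D13 d

/-- Ruleset E = D ∪ {E}. -/
def rulesetE : Ruleset := fun d => rulesetD d ∧ ERule d

/-- Ruleset CL = E − {D11, D12} = {D10, D13, E}. -/
def rulesetCL : Ruleset := fun d => D10 d ∧ D13 d ∧ ERule d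

/-- Ruleset N = D − {D11, D12} = {D10, D13}. -/
def rulesetN : Ruleset := fun d => D10 d ∧ D13 d

/-- Ruleset E* = {D10*, D11, D12, D13, E}. -/
def rulesetEstar : Ruleset :=
  fun d => D10star d ∧ D11 d ∧ D12 d ∧ D13 d ∧ ERule d

/-- Ruleset E′ = {D10′, D11, D12, D13, E}. -/
def rulesetEprime : Ruleset :=
  fun d => D10prime d ∧ D11 d ∧ D12 d ∧ D13 d ∧ ERule d

/-- An S-dialogue: a dialogue adhering to the particle rules and to the
    structural rules S. -/
def Legal (S : Ruleset) (d : Dialogue) : Prop := ParticleOK d ∧ S d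

/-- Extend a dialogue by one move. -/
def Dialogue.extend (d : Dialogue) (m : Move) : Dialogue :=
  ⟨d.initial, d.moves ++ [m]⟩

/-- The position about to be played. -/
def nextPos (d : Dialogue) : ℕ := d.moves.length + 1

/-- It is P's turn (the next position is even). -/
def PTurn (d : Dialogue) : Prop := nextPos d % 2 = 0

/-- The move `m` legally extends the S-dialogue `d`. -/
def LegalExt (S : Ruleset) (d : Dialogue) (m : Move) : Prop :=
  Legal S (d.extend m)

/-- `PWinningC S C d` holds when P, moving under the additional constraint
    `C` on P's own choices, has a winning strategy in the S-dialogue game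
    continuing the dialogue `d`: at P's turn, P has a legal move (satisfying
    `C`) after which P is still winning; at O's turn, every legal O-move
    leads to a position where P is winning (in particular, if no O-move is
    available, P has won: P made the last move and O cannot move). -/
inductive PWinningC (S : Ruleset) (C : Dialogue → Move → Prop) : Dialogue → Prop
  | pMove (d : Dialogue) (m : Move) (hturn : PTurn d)
      (hm : LegalExt S d m) (hC : C d m)
      (h : PWinningC S C (d.extend m)) : PWinningC S C d
  | oMoves (d : Dialogue) (hturn : ¬ PTurn d)
      (h : ∀ m, LegalExt S d m → PWinningC S C (d.extend m)) :
      PWinningC S C d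

/-- P has a winning strategy continuing the S-dialogue `d`. -/
def PWinning (S : Ruleset) (d : Dialogue) : Prop :=
  PWinningC S (fun _ _ => True) d

/-- `valid S φ` (written `⊨_S φ`): the opening assertion of φ is itself a
    legal S-dialogue and P has an S-winning strategy for φ. -/
def valid (S : Ruleset) (φ : Formula) : Prop :=
  Legal S ⟨φ, []⟩ ∧ PWinning S ⟨φ, []⟩

/-- Derivability in intuitionistic propositional logic (a Hilbert-style
    axiomatization with modus ponens). -/
inductive IProv : Formula → Prop
  | k (a b : Formula) : IProv (.imp a (.imp b a))
  | s (a b c : Formula) :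
      IProv (.imp (.imp a (.imp b c)) (.imp (.imp a b) (.imp a c)))
  | andE1 (a b : Formula) : IProv (.imp (.and a b) a)
  | andE2 (a b : Formula) : IProv (.imp (.and a b) b)
  | andI (a b : Formula) : IProv (.imp a (.imp b (.and a b)))
  | orI1 (a b : Formula) : IProv (.imp a (.or a b))
  | orI2 (a b : Formula) : IProv (.imp b (.or a b))
  | orE (a b c : Formula) :
      IProv (.imp (.imp a c) (.imp (.imp b c) (.imp (.or a b) c)))
  | negI (a b : Formula) :
      IProv (.imp (.imp a b) (.imp (.imp a (.neg b)) (.neg a)))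
  | negE (a b : Formula) : IProv (.imp (.neg a) (.imp a b))
  | mp (a b : Formula) : IProv (.imp a b) → IProv a → IProv b

/-- The stability principle ¬¬p → p for the atom `p`. -/
def stab (p : ℕ) : Formula := .imp (.neg (.neg (.atom p))) (.atom p)

/-- Stable logic: intuitionistic propositional logic plus all instances of
    the stability scheme ¬¬p → p for atoms p, closed under modus ponens. -/
inductive StableProv : Formula → Prop
  | intuit (a : Formula) : IProv a → StableProv a
  | stab (p : ℕ) : StableProv (stab p)
  | mp (a b : Formula) : StableProv (.imp a b) → StableProv a → StableProv b

/-- Boolean evaluation of a formula under a valuation of its atoms. -/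
def Formula.eval (v : ℕ → Bool) : Formula → Bool
  | .atom p => v p
  | .neg a => !(a.eval v)
  | .and a b => a.eval v && b.eval v
  | .or a b => a.eval v || b.eval v
  | .imp a b => !(a.eval v) || b.eval v

/-- A classical tautology: true under every Boolean valuation. -/
def Tautology (φ : Formula) : Prop := ∀ v, φ.eval v = true

/-- Uniform substitution of formulas for atoms, applied homomorphically. -/
def Formula.subst (σ : ℕ → Formula) : Formula → Formula
  | .atom p => σ p
  | .neg a => .neg (a.subst σ)
  | .and a b => .and (a.subst σ) (b.subst σ)
  | .or a b => .or (a.subst σ) (b.subst σ)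
  | .imp a b => .imp (a.subst σ) (b.subst σ)

/-- The atoms occurring in a formula. -/
def Formula.atoms : Formula → List ℕ
  | .atom p => [p]
  | .neg a => a.atoms
  | .and a b => a.atoms ++ b.atoms
  | .or a b => a.atoms ++ b.atoms
  | .imp a b => a.atoms ++ b.atoms

/-- Conjunction of a nonempty list of formulas. -/
def conjList (f : Formula) : List Formula → Formula
  | [] => f
  | g :: gs => .and f (conjList g gs)

/-- The conjunction (¬¬p → p) ∧ … of stability instances for the atoms
    `p :: ps`. -/
def stabConj (p : ℕ) (ps : List ℕ) : Formula :=
  conjList (stab p) (ps.map stab)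


/-! A winning strategy of P for an E′-dialogue is read as a derivation. Along a play we record
the formulas O has asserted, which serve as hypotheses, and the stack of O's open attacks on P,
each with the disjunction of P's admissible defences as its goal. The situations reached under
P's strategy are winning positions of an abstract game (`AbsWin`), and every such position is
sound for stable logic (intuitionistic logic with ¬¬p → p for atoms): the hypotheses entail the
goal on top of the stack. Rule E lets O answer each P-move in every way the particle rules
allow, so the strategy covers all introduction and elimination steps; rule D11 makes P answer
only the top of the stack, which keeps the reasoning intuitionistic; and rule D10′ is matched by
the stability axioms. Finally, substituting ⊤ for the atoms other than p₁, …, pₙ turns a stable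
proof of φ into an intuitionistic proof of (¬¬p₁ → p₁) ∧ … ∧ (¬¬pₙ → pₙ) → φ. -/

def ctxImp (Γ : List Formula) (a : Formula) : Formula := Γ.foldr .imp a

namespace IProv

theorem imp_intro {a : Formula} (c : Formula) (h : IProv a) : IProv (.imp c a) :=
  .mp _ _ (.k a c) h

theorem imp_mp {a b c : Formula} (h₁ : IProv (.imp c (.imp a b))) (h₂ : IProv (.imp c a)) :
    IProv (.imp c b) :=
  .mp _ _ (.mp _ _ (.s c a b) h₁) h₂

theorem imp_self (a : Formula) : IProv (.imp a a) :=
  imp_mp (.k a (.imp a a)) (.k a a)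

theorem imp_trans {a b c : Formula} (h₁ : IProv (.imp a b)) (h₂ : IProv (.imp b c)) :
    IProv (.imp a c) :=
  imp_mp (imp_intro a h₂) h₁

theorem imp_comp (a b c : Formula) :
    IProv (.imp (.imp b c) (.imp (.imp a b) (.imp a c))) :=
  imp_trans (.k (.imp b c) a) (.s a b c)

theorem imp_swap (a b c : Formula) :
    IProv (.imp (.imp a (.imp b c)) (.imp b (.imp a c))) :=
  imp_trans (.s a b c)
    (imp_mp (imp_trans (.k _ b) (.s b (.imp a b) (.imp a c))) (imp_intro _ (.k b a)))

theorem ctxImp_mp : ∀ (Γ : List Formula) (a b : Formula),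
    IProv (.imp (ctxImp Γ (.imp a b)) (.imp (ctxImp Γ a) (ctxImp Γ b)))
  | [], _, _ => imp_self _
  | c :: Γ, a, b => imp_trans (.mp _ _ (imp_comp c _ _) (ctxImp_mp Γ a b)) (.s c _ _)

theorem imp_ctxImp : ∀ (Γ : List Formula) (a : Formula), IProv (.imp a (ctxImp Γ a))
  | [], a => imp_self a
  | c :: Γ, a => imp_trans (imp_ctxImp Γ a) (.k _ c)

theorem ctxImp_swap : ∀ (Γ : List Formula) (a b : Formula),
    IProv (.imp (.imp a (ctxImp Γ b)) (ctxImp Γ (.imp a b)))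
  | [], _, _ => imp_self _
  | c :: Γ, a, b =>
    imp_trans (imp_swap a c _) (.mp _ _ (imp_comp c _ _) (ctxImp_swap Γ a b))

end IProv

def StableEntails (Γ : List Formula) (a : Formula) : Prop := StableProv (ctxImp Γ a)

namespace StableEntails

variable {Γ : List Formula} {a b : Formula}

theorem of_stableProv (h : StableProv a) : StableEntails Γ a :=
  StableProv.mp _ _ (.intuit _ (IProv.imp_ctxImp Γ a)) h

theorem of_iProv (h : IProv a) : StableEntails Γ a := of_stableProv (.intuit _ h)

theorem mp (h₁ : StableEntails Γ (.imp a b)) (h₂ : StableEntails Γ a) : StableEntails Γ b :=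
  StableProv.mp _ _ (StableProv.mp _ _ (.intuit _ (IProv.ctxImp_mp Γ a b)) h₁) h₂

theorem cons (c : Formula) (h : StableEntails Γ a) : StableEntails (c :: Γ) a :=
  StableProv.mp _ _ (.intuit _ (.k _ c)) h

theorem of_mem (h : a ∈ Γ) : StableEntails Γ a := by
  induction Γ with
  | nil => cases h
  | cons c Γ ih =>
    rcases List.mem_cons.1 h with rfl | h
    · exact .intuit _ (IProv.imp_ctxImp Γ a)
    · exact (ih h).cons c

theorem head : StableEntails (a :: Γ) a := of_mem List.mem_cons_self

theorem imp_intro (h : StableEntails (a :: Γ) b) : StableEntails Γ (.imp a b) :=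
  StableProv.mp _ _ (.intuit _ (IProv.ctxImp_swap Γ a b)) h

end StableEntails

/-- The language has no constants: `p₀ → p₀` and its negation serve as ⊤ and ⊥. -/
def Formula.verum : Formula := .imp (.atom 0) (.atom 0)

def Formula.falsum : Formula := .neg .verum

theorem IProv.imp_verum (a : Formula) : IProv (.imp a .verum) := imp_intro a (imp_self _)

theorem IProv.subst (σ : ℕ → Formula) {a : Formula} (h : IProv a) : IProv (a.subst σ) := by
  induction h with
  | k => exact .k _ _
  | s => exact .s _ _ _
  | andE1 => exact .andE1 _ _
  | andE2 => exact .andE2 _ _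
  | andI => exact .andI _ _
  | orI1 => exact .orI1 _ _
  | orI2 => exact .orI2 _ _
  | orE => exact .orE _ _ _
  | negI => exact .negI _ _
  | negE => exact .negE _ _
  | mp _ _ _ _ ih₁ ih₂ => exact .mp _ _ ih₁ ih₂

theorem Formula.subst_eq_self {σ : ℕ → Formula} {a : Formula}
    (h : ∀ q ∈ a.atoms, σ q = .atom q) : a.subst σ = a := by
  induction a with
  | atom q => exact h q (List.mem_singleton_self q)
  | neg a ih => exact congrArg Formula.neg (ih h)
  | and a b iha ihb | or a b iha ihb | imp a b iha ihb =>
    simp only [Formula.atoms, List.mem_append] at h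
    simp only [Formula.subst, iha fun q hq => h q (.inl hq), ihb fun q hq => h q (.inr hq)]

theorem IProv.conjList_imp : ∀ {f g : Formula} {fs : List Formula}, g ∈ f :: fs →
    IProv (.imp (conjList f fs) g)
  | _, _, [], hg => List.mem_singleton.1 hg ▸ imp_self _
  | f, g, f' :: fs, hg => by
    rcases List.mem_cons.1 hg with rfl | hg
    · exact .andE1 _ _
    · exact imp_trans (.andE2 f _) (conjList_imp hg)

theorem IProv.stabConj_imp {p q : ℕ} {ps : List ℕ} (hq : q ∈ p :: ps) :
    IProv (.imp (stabConj p ps) (stab q)) :=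
  conjList_imp (List.mem_map_of_mem hq)

def keepAtoms (qs : List ℕ) (q : ℕ) : Formula := if q ∈ qs then .atom q else .verum

/-- Substituting `⊤` for the atoms outside `p :: ps` makes their stability axioms
intuitionistic theorems; the remaining ones are supplied by the hypothesis `stabConj p ps`. -/
theorem StableProv.iProv_stabConj_imp_subst (p : ℕ) (ps : List ℕ) {a : Formula}
    (h : StableProv a) : IProv (.imp (stabConj p ps) (a.subst (keepAtoms (p :: ps)))) := by
  induction h with
  | intuit a ha => exact IProv.imp_intro _ (ha.subst _)
  | stab q =>
    by_cases hq : q ∈ p :: ps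
    · simpa [LorenzenDialogues.stab, Formula.subst, keepAtoms, hq] using IProv.stabConj_imp hq
    · simpa [LorenzenDialogues.stab, Formula.subst, keepAtoms, hq] using
        IProv.imp_intro _ (IProv.imp_verum _)
  | mp a b _ _ ih₁ ih₂ => exact IProv.imp_mp ih₁ ih₂

def Statement.formula? : Statement → Option Formula
  | .form a => some a
  | _ => none

/-- The disjunction of the defences that the particle rules allow against an attack on a
statement (`falsum` when there is none). -/
def defenceGoal : Statement → Option Statement → Formula
  | .andL, some (.form (.and a _)) => a
  | .andR, some (.form (.and _ b)) => b
  | .qmark, some (.form (.or a b)) => .or a b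
  | .form _, some (.form (.imp _ b)) => b
  | _, _ => .falsum

theorem IProv.imp_defenceGoal {χ ψ : Formula} {st : Statement} (h : Defends χ st (.form ψ)) :
    IProv (.imp ψ (defenceGoal st (some (.form χ)))) := by
  cases h
  case orL => exact .orI1 _ _
  case orR => exact .orI2 _ _
  all_goals exact imp_self _

/-- The situations of the abstract game: P is to move (`free`), P has just asserted `ψ`, or
P has just attacked O's formula `χ` with `st`. -/
inductive Focus : Type
  | free
  | asserted (ψ : Formula)
  | attacked (χ : Formula) (st : Statement)

/-- Winning positions of P in the abstract game. `Γ` lists the formulas granted by O and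
`goals` holds, for each open attack of O (most recent first), what P has to establish to
answer it; by rule D11 only the head may be answered. -/
inductive AbsWin : List Formula → List Formula → Focus → Prop
  | defend {Γ goals : List Formula} {χ ψ : Formula} {st : Statement}
      (hdef : Defends χ st (.form ψ)) (h : AbsWin Γ goals (.asserted ψ)) :
      AbsWin Γ (defenceGoal st (some (.form χ)) :: goals) .free
  | attack {Γ goals : List Formula} {χ : Formula} {st : Statement} (hχ : χ ∈ Γ)
      (h : AbsWin Γ goals (.attacked χ st)) : AbsWin Γ goals .free
  | assert {Γ goals : List Formula} {ψ : Formula}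
      (hatom : ∀ q, ψ = .atom q → .atom q ∈ Γ ∨ .neg (.neg (.atom q)) ∈ Γ)
      (h : ∀ st, Attacks st ψ →
        AbsWin (st.formula?.toList ++ Γ) (defenceGoal st (some (.form ψ)) :: goals) .free) :
      AbsWin Γ goals (.asserted ψ)
  | respond {Γ goals : List Formula} {χ : Formula} {st : Statement} (hatt : Attacks st χ)
      (hcounter : ∀ a, st = .form a → AbsWin Γ goals (.asserted a))
      (hdef : ∀ δ, Defends χ st (.form δ) → AbsWin (δ :: Γ) goals .free) :
      AbsWin Γ goals (.attacked χ st)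

def Focus.Sound (Γ goals : List Formula) : Focus → Prop
  | .free => StableEntails Γ (goals.headD .falsum)
  | .asserted ψ => StableEntails Γ ψ
  | .attacked χ _ => StableEntails (χ :: Γ) (goals.headD .falsum)

namespace AbsWin

open StableEntails

variable {Γ goals : List Formula}

theorem sound_asserted {ψ : Formula}
    (hatom : ∀ q, ψ = .atom q → .atom q ∈ Γ ∨ .neg (.neg (.atom q)) ∈ Γ)
    (ih : ∀ st, Attacks st ψ → StableEntails (st.formula?.toList ++ Γ)
      (defenceGoal st (some (.form ψ)))) :
    StableEntails Γ ψ := by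
  cases ψ with
  | atom q =>
    rcases hatom q rfl with h | h
    · exact of_mem h
    · exact (of_stableProv (.stab q)).mp (of_mem h)
  | neg a =>
    exact ((of_iProv (.negI a .verum)).mp (of_iProv (IProv.imp_verum a))).mp
      (ih _ (.neg a)).imp_intro
  | and a b => exact ((of_iProv (.andI a b)).mp (ih _ (.andL a b))).mp (ih _ (.andR a b))
  | or a b => exact ih _ (.qmark a b)
  | imp a b => exact (ih _ (.imp a b)).imp_intro

theorem sound_attacked {χ g : Formula} {st : Statement} (hatt : Attacks st χ)
    (ihc : ∀ a, st = .form a → StableEntails Γ a)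
    (ihd : ∀ δ, Defends χ st (.form δ) → StableEntails (δ :: Γ) g) :
    StableEntails (χ :: Γ) g := by
  cases hatt with
  | andL a b =>
    exact (ihd a (.andL a b)).imp_intro.cons _ |>.mp ((of_iProv (.andE1 a b)).mp head)
  | andR a b =>
    exact (ihd b (.andR a b)).imp_intro.cons _ |>.mp ((of_iProv (.andE2 a b)).mp head)
  | qmark a b =>
    exact (((of_iProv (.orE a b g)).mp (ihd a (.orL a b)).imp_intro).mp
      (ihd b (.orR a b)).imp_intro).cons _ |>.mp head
  | imp a b => exact (ihd b (.imp a b)).imp_intro.cons _ |>.mp (head.mp ((ihc a rfl).cons _))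
  | neg a => exact ((of_iProv (.negE a g)).mp head).mp ((ihc a rfl).cons _)

theorem sound {f : Focus} (h : AbsWin Γ goals f) : f.Sound Γ goals := by
  induction h with
  | defend hdef _ ih => exact (of_iProv (IProv.imp_defenceGoal hdef)).mp ih
  | attack hχ _ ih => exact ih.imp_intro.mp (of_mem hχ)
  | assert hatom _ ih => exact sound_asserted hatom ih
  | respond hatt _ _ ihc ihd => exact sound_attacked hatt ihc ihd

end AbsWin

namespace Dialogue

variable {d : Dialogue} {m : Move}

@[simp] theorem extend_moves_length : (d.extend m).moves.length = d.moves.length + 1 := by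
  simp [extend]

theorem moveAt_bounds {k : ℕ} {mv : Move} (h : d.moveAt k = some mv) :
    0 < k ∧ k ≤ d.moves.length := by
  unfold moveAt at h
  split_ifs at h
  obtain ⟨hlt, -⟩ := List.getElem?_eq_some_iff.1 h
  omega

theorem stmtAt_le {k : ℕ} {s : Statement} (h : d.stmtAt k = some s) : k ≤ d.moves.length := by
  unfold stmtAt at h
  split_ifs at h with hk
  · omega
  · obtain ⟨mv, hmv, -⟩ := Option.map_eq_some_iff.1 h
    obtain ⟨hlt, -⟩ := List.getElem?_eq_some_iff.1 hmv
    omega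

theorem stmtAt_of_moveAt {k : ℕ} {mv : Move} (h : d.moveAt k = some mv) :
    d.stmtAt k = some mv.statement := by
  have hk := (moveAt_bounds h).1
  unfold moveAt at h
  rw [if_neg (by omega)] at h
  rw [stmtAt, if_neg (by omega), h, Option.map_some]

theorem moveAt_extend (k : ℕ) :
    (d.extend m).moveAt k = if k = d.moves.length + 1 then some m else d.moveAt k := by
  unfold moveAt extend
  split_ifs <;> try omega
  · rfl
  · simp [show k - 1 = d.moves.length by omega]
  · rcases Nat.lt_or_ge (k - 1) d.moves.length with hk | hk
    · exact List.getElem?_append_left hk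
    · rw [List.getElem?_eq_none (by rw [List.length_append, List.length_singleton]; omega),
        List.getElem?_eq_none hk]

theorem moveAt_extend_of_le {k : ℕ} (hk : k ≤ d.moves.length) :
    (d.extend m).moveAt k = d.moveAt k := by
  rw [moveAt_extend, if_neg (by omega)]

theorem moveAt_extend_self : (d.extend m).moveAt (d.moves.length + 1) = some m := by
  rw [moveAt_extend, if_pos rfl]

theorem stmtAt_extend_of_le {k : ℕ} (hk : k ≤ d.moves.length) :
    (d.extend m).stmtAt k = d.stmtAt k := by
  unfold stmtAt extend
  split_ifs
  · rfl
  · rw [List.getElem?_append_left (by omega)]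

theorem stmtAt_extend_self : (d.extend m).stmtAt (d.moves.length + 1) = some m.statement :=
  stmtAt_of_moveAt moveAt_extend_self

end Dialogue

open Dialogue

theorem pTurn_iff {d : Dialogue} : PTurn d ↔ d.moves.length % 2 = 1 := by
  simp only [PTurn, nextPos]
  omega

theorem ParticleOK.ref_lt {d : Dialogue} (hP : ParticleOK d) {j : ℕ} {mv : Move}
    (h : d.moveAt j = some mv) : mv.ref < j := by
  have hj := (moveAt_bounds h).1
  unfold Dialogue.moveAt at h
  rw [if_neg (by omega)] at h
  have := (hP (j - 1) mv h).1
  omega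

theorem ParticleOK.moveOK_last {d : Dialogue} {m : Move} (hP : ParticleOK (d.extend m)) :
    MoveOK (d.extend m) (d.moves.length + 1) m :=
  hP _ m (by simp [Dialogue.extend])

section Extend

variable {d : Dialogue} {m : Move}

theorem isDefenseOf_extend {j r : ℕ} :
    IsDefenseOf (d.extend m) j r ↔
      IsDefenseOf d j r ∨ j = d.moves.length + 1 ∧ m.isAttack = false ∧ m.ref = r := by
  have hnone : d.moveAt (d.moves.length + 1) = none := by simp [Dialogue.moveAt]
  unfold IsDefenseOf
  rw [moveAt_extend]
  split_ifs with hj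
  · subst hj
    simp [hnone]
  · simp [hj]

theorem isAttackOn_extend {j r : ℕ} :
    IsAttackOn (d.extend m) j r ↔
      IsAttackOn d j r ∨ j = d.moves.length + 1 ∧ m.isAttack = true ∧ m.ref = r := by
  have hnone : d.moveAt (d.moves.length + 1) = none := by simp [Dialogue.moveAt]
  unfold IsAttackOn
  rw [moveAt_extend]
  split_ifs with hj
  · subst hj
    simp [hnone]
  · simp [hj]

theorem IsDefenseOf.le_length {j r : ℕ} (h : IsDefenseOf d j r) : j ≤ d.moves.length :=
  (moveAt_bounds h.choose_spec.1).2

theorem IsDefenseOf.ref_lt {j r : ℕ} (hP : ParticleOK d) (h : IsDefenseOf d j r) : r < j := by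
  obtain ⟨mv, hmv, -, rfl⟩ := h
  exact hP.ref_lt hmv

theorem IsAttackOn.le_length {j r : ℕ} (h : IsAttackOn d j r) : j ≤ d.moves.length :=
  (moveAt_bounds h.choose_spec.1).2

theorem IsAttackOn.ref_lt {j r : ℕ} (hP : ParticleOK d) (h : IsAttackOn d j r) : r < j := by
  obtain ⟨mv, hmv, -, rfl⟩ := h
  exact hP.ref_lt hmv

theorem isAttackPos_extend_of_le {r : ℕ} (hr : r ≤ d.moves.length) :
    IsAttackPos (d.extend m) r ↔ IsAttackPos d r := by
  rw [IsAttackPos, IsAttackPos, moveAt_extend_of_le hr]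

theorem openAt_extend_of_le {r k : ℕ} (hk : k ≤ d.moves.length + 1) (hr : r ≤ d.moves.length) :
    OpenAt (d.extend m) r k ↔ OpenAt d r k := by
  unfold OpenAt
  rw [isAttackPos_extend_of_le hr]
  refine and_congr_right fun _ => not_congr (exists_congr fun j => and_congr_right fun hj => ?_)
  rw [isDefenseOf_extend, or_iff_left fun h => by have := h.1; omega]

theorem openAt_extend_succ {r : ℕ} (hr : r ≤ d.moves.length) :
    OpenAt (d.extend m) r (d.moves.length + 1 + 1) ↔
      OpenAt d r (d.moves.length + 1) ∧ ¬ (m.isAttack = false ∧ m.ref = r) := by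
  unfold OpenAt
  rw [isAttackPos_extend_of_le hr, and_assoc, ← not_or]
  refine and_congr_right fun _ => not_congr ⟨?_, ?_⟩
  · rintro ⟨j, -, h⟩
    rcases isDefenseOf_extend.1 h with h | ⟨-, h⟩
    · exact .inl ⟨j, Nat.lt_succ_of_le h.le_length, h⟩
    · exact .inr h
  · rintro (⟨j, hj, h⟩ | h)
    · exact ⟨j, by omega, isDefenseOf_extend.2 (.inl h)⟩
    · exact ⟨_, Nat.lt_succ_self _, isDefenseOf_extend.2 (.inr ⟨rfl, h⟩)⟩

theorem openAt_extend_self (hP : ParticleOK d) (href : m.ref ≤ d.moves.length) :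
    OpenAt (d.extend m) (d.moves.length + 1) (d.moves.length + 1 + 1) ↔ m.isAttack = true := by
  have hnone :
      ¬ ∃ j, j < d.moves.length + 1 + 1 ∧ IsDefenseOf (d.extend m) j (d.moves.length + 1) := by
    rintro ⟨j, -, h⟩
    rcases isDefenseOf_extend.1 h with h | ⟨-, -, h⟩
    · have := h.ref_lt hP
      have := h.le_length
      omega
    · omega
  rw [OpenAt, and_iff_left hnone]
  simp [IsAttackPos, moveAt_extend_self]

end Extend

/-- The move at list index `i` occupies position `i + 1`, so O's moves are those at even index. -/
def oAssertions (d : Dialogue) : List Formula :=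
  (d.moves.zipIdx.filterMap fun x => if x.2 % 2 = 0 then x.1.statement.formula? else none).reverse

theorem oAssertions_extend {d : Dialogue} {m : Move} :
    oAssertions (d.extend m) =
      (if d.moves.length % 2 = 0 then m.statement.formula?.toList else []) ++ oAssertions d := by
  unfold oAssertions Dialogue.extend
  rw [List.zipIdx_append, List.filterMap_append, List.reverse_append]
  congr 1
  split_ifs with h <;> cases hm : m.statement.formula? <;> simp [h, hm]

theorem mem_oAssertions {d : Dialogue} {j : ℕ} {ψ : Formula} (hj : j % 2 = 1)
    (h : d.stmtAt j = some (.form ψ)) : ψ ∈ oAssertions d := by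
  unfold Dialogue.stmtAt at h
  rw [if_neg (by omega)] at h
  obtain ⟨mv, hmv, hst⟩ := Option.map_eq_some_iff.1 h
  refine List.mem_reverse.2 (List.mem_filterMap.2 ⟨(mv, j - 1), ?_, ?_⟩)
  · exact List.mem_zipIdx_iff_getElem?.2 hmv
  · simp [show (j - 1) % 2 = 0 by omega, hst, Statement.formula?]

theorem exists_eq_cons_of_pairwise_gt {l : List ℕ} {r : ℕ} (hl : l.Pairwise (· > ·))
    (hr : r ∈ l) (hmax : ∀ x ∈ l, x ≤ r) : ∃ t, l = r :: t := by
  cases l with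
  | nil => cases hr
  | cons x t =>
    rcases List.mem_cons.1 hr with rfl | hr
    · exact ⟨t, rfl⟩
    · have := (List.pairwise_cons.1 hl).1 r hr
      have := hmax x List.mem_cons_self
      omega

open Classical in
noncomputable def openOAttacks (d : Dialogue) : List ℕ :=
  ((List.range (d.moves.length + 1)).filter
    fun r => r % 2 = 1 ∧ OpenAt d r (d.moves.length + 1)).reverse

theorem mem_openOAttacks {d : Dialogue} {r : ℕ} :
    r ∈ openOAttacks d ↔ r ≤ d.moves.length ∧ r % 2 = 1 ∧ OpenAt d r (d.moves.length + 1) := by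
  simp [openOAttacks]

theorem openOAttacks_le_length {d : Dialogue} {r : ℕ} (hr : r ∈ openOAttacks d) :
    r ≤ d.moves.length :=
  (mem_openOAttacks.1 hr).1

theorem openOAttacks_sorted (d : Dialogue) : (openOAttacks d).Pairwise (· > ·) := by
  unfold openOAttacks
  rw [List.pairwise_reverse]
  exact List.pairwise_lt_range.filter _

section OpenOAttacks

variable {d : Dialogue} {m : Move}

open Classical in
theorem openOAttacks_extend (hP : ParticleOK d)
    (href : m.ref ≤ d.moves.length) :
    openOAttacks (d.extend m) =
      (if d.moves.length % 2 = 0 ∧ m.isAttack = true then [d.moves.length + 1] else []) ++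
        (openOAttacks d).filter fun r => ¬ (m.isAttack = false ∧ m.ref = r) := by
  unfold openOAttacks
  rw [extend_moves_length, List.range_succ, List.filter_append, List.reverse_append,
    List.filter_reverse, List.filter_filter]
  congr 1
  · simp only [List.filter_cons, List.filter_nil, decide_eq_true_eq, openAt_extend_self hP href]
    by_cases h : d.moves.length % 2 = 0 ∧ m.isAttack = true
    · rw [if_pos h, if_pos ⟨by omega, h.2⟩]
      rfl
    · rw [if_neg h, if_neg fun h' => h ⟨by omega, h'.2⟩]
      rfl
  · congr 1
    refine List.filter_congr fun r hr => ?_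
    have := openAt_extend_succ (m := m) (Nat.lt_succ_iff.1 (List.mem_range.1 hr))
    simp_all only [Bool.decide_and]
    ac_rfl

theorem openOAttacks_extend_oAttack (hP : ParticleOK d) (href : m.ref ≤ d.moves.length)
    (hn : d.moves.length % 2 = 0) (hatk : m.isAttack = true) :
    openOAttacks (d.extend m) = (d.moves.length + 1) :: openOAttacks d := by
  rw [openOAttacks_extend hP href, if_pos ⟨hn, hatk⟩]
  simp [hatk]

theorem openOAttacks_extend_eq_self (hP : ParticleOK d) (href : m.ref ≤ d.moves.length)
    (hO : ¬ (d.moves.length % 2 = 0 ∧ m.isAttack = true))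
    (hdef : m.isAttack = false → m.ref % 2 = 0) :
    openOAttacks (d.extend m) = openOAttacks d := by
  rw [openOAttacks_extend hP href, if_neg hO, List.nil_append, List.filter_eq_self]
  intro r hr
  have hodd := (mem_openOAttacks.1 hr).2.1
  simp only [decide_eq_true_eq]
  rintro ⟨hf, rfl⟩
  have := hdef hf
  omega

theorem openOAttacks_extend_answer (hP : ParticleOK d) (hn : d.moves.length % 2 = 1)
    (hdef : m.isAttack = false) {rest : List ℕ} (htop : openOAttacks d = m.ref :: rest) :
    openOAttacks (d.extend m) = rest := by
  have hsorted := openOAttacks_sorted d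
  rw [htop, List.pairwise_cons] at hsorted
  have href : m.ref ≤ d.moves.length := (mem_openOAttacks.1 (htop ▸ List.mem_cons_self)).1
  rw [openOAttacks_extend hP href, if_neg (by omega), List.nil_append, htop]
  simp only [hdef, true_and, List.filter_cons, decide_not, decide_true, Bool.not_true,
    Bool.false_eq_true, if_false]
  refine List.filter_eq_self.2 fun r hr => ?_
  have := hsorted.1 r hr
  simp only [Bool.not_eq_eq_eq_not, Bool.not_true, decide_eq_false_iff_not]
  omega

end OpenOAttacks

def attackGoal (d : Dialogue) (r : ℕ) : Formula :=
  match d.moveAt r with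
  | some atk => defenceGoal atk.statement (d.stmtAt atk.ref)
  | none => .falsum

noncomputable def goalStack (d : Dialogue) : List Formula :=
  (openOAttacks d).map (attackGoal d)

section GoalStack

variable {d : Dialogue} {m : Move}

theorem attackGoal_extend_of_le (hP : ParticleOK d) {k : ℕ} (hk : k ≤ d.moves.length) :
    attackGoal (d.extend m) k = attackGoal d k := by
  unfold attackGoal
  rw [moveAt_extend_of_le hk]
  cases h : d.moveAt k with
  | none => rfl
  | some atk => simp only [stmtAt_extend_of_le (hP.ref_lt h |>.le.trans hk)]

theorem attackGoal_extend_self (href : m.ref ≤ d.moves.length) :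
    attackGoal (d.extend m) (d.moves.length + 1) = defenceGoal m.statement (d.stmtAt m.ref) := by
  simp only [attackGoal, moveAt_extend_self, stmtAt_extend_of_le href]

theorem attackGoal_eq {r : ℕ} {atk : Move} {χ : Formula} (h : d.moveAt r = some atk)
    (hχ : d.stmtAt atk.ref = some (.form χ)) :
    attackGoal d r = defenceGoal atk.statement (some (.form χ)) := by
  simp only [attackGoal, h, hχ]

theorem map_attackGoal_extend (hP : ParticleOK d) {l : List ℕ}
    (hl : ∀ r ∈ l, r ≤ d.moves.length) :
    l.map (attackGoal (d.extend m)) = l.map (attackGoal d) :=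
  List.map_congr_left fun r hr => attackGoal_extend_of_le hP (hl r hr)

theorem goalStack_extend_oAttack (hP : ParticleOK d) (href : m.ref ≤ d.moves.length)
    (hn : d.moves.length % 2 = 0) (hatk : m.isAttack = true) :
    goalStack (d.extend m) = defenceGoal m.statement (d.stmtAt m.ref) :: goalStack d := by
  rw [goalStack, openOAttacks_extend_oAttack hP href hn hatk, List.map_cons,
    attackGoal_extend_self href, map_attackGoal_extend hP fun _ => openOAttacks_le_length,
    goalStack]

theorem goalStack_extend_eq_self (hP : ParticleOK d) (href : m.ref ≤ d.moves.length)
    (hO : ¬ (d.moves.length % 2 = 0 ∧ m.isAttack = true))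
    (hdef : m.isAttack = false → m.ref % 2 = 0) :
    goalStack (d.extend m) = goalStack d := by
  rw [goalStack, openOAttacks_extend_eq_self hP href hO hdef,
    map_attackGoal_extend hP fun _ => openOAttacks_le_length, goalStack]

theorem goalStack_eq_cons_extend_answer (hP : ParticleOK d) (hn : d.moves.length % 2 = 1)
    (hdef : m.isAttack = false) {rest : List ℕ} (htop : openOAttacks d = m.ref :: rest) :
    goalStack d = attackGoal d m.ref :: goalStack (d.extend m) := by
  rw [goalStack, goalStack, openOAttacks_extend_answer hP hn hdef htop, htop, List.map_cons,
    map_attackGoal_extend hP fun _ hr => openOAttacks_le_length (htop ▸ List.mem_cons_of_mem _ hr)]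

end GoalStack

section Legality

variable {d : Dialogue} {m : Move}

theorem MoveOK.extend (hP : ParticleOK d) {n : ℕ} {mv : Move} (hn : n ≤ d.moves.length + 1)
    (h : MoveOK d n mv) : MoveOK (d.extend m) n mv := by
  obtain ⟨hlt, hpar, hatk, hdef⟩ := h
  refine ⟨hlt, hpar, fun ha => ?_, fun ha => ?_⟩
  · obtain ⟨ψ, hψ, hatt⟩ := hatk ha
    exact ⟨ψ, by rwa [stmtAt_extend_of_le (by omega)], hatt⟩
  · obtain ⟨a, χ, hma, haa, hsa, hd⟩ := hdef ha
    have := hP.ref_lt hma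
    exact ⟨a, χ, by rwa [moveAt_extend_of_le (by omega)], haa,
      by rwa [stmtAt_extend_of_le (by omega)], hd⟩

theorem ParticleOK.extend (hP : ParticleOK d) (hm : MoveOK d (d.moves.length + 1) m) :
    ParticleOK (d.extend m) := by
  intro i mv h
  have hi : i < d.moves.length + 1 := by simpa using (List.getElem?_eq_some_iff.1 h).1
  refine MoveOK.extend hP (by omega) ?_
  rcases Nat.lt_or_ge i d.moves.length with hi' | hi'
  · exact hP i mv (by rwa [Dialogue.extend, List.getElem?_append_left hi'] at h)
  · obtain rfl : i = d.moves.length := by omega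
    obtain rfl : mv = m := by simpa [Dialogue.extend] using h.symm
    exact hm

theorem D10prime.extend_oMove (h : D10prime d) (hn : d.moves.length % 2 = 0) :
    D10prime (d.extend m) := by
  intro n q hne hst
  have hn' : n ≤ d.moves.length := by
    have := stmtAt_le hst
    simp only [extend_moves_length] at this
    omega
  rw [stmtAt_extend_of_le hn'] at hst
  obtain ⟨j, hj, hodd, hj'⟩ := h n q hne hst
  exact ⟨j, hj, hodd, by rwa [stmtAt_extend_of_le (by omega)]⟩

theorem D11.extend_of_ref_last (h : D11 d) (hP : ParticleOK d) (href : m.ref = d.moves.length)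
    (hm : MoveOK d (d.moves.length + 1) m) : D11 (d.extend m) := by
  intro n r hdef
  rcases isDefenseOf_extend.1 hdef with hd | ⟨rfl, hf, rfl⟩
  · have hrn := hd.ref_lt hP
    have hnl := hd.le_length
    obtain ⟨ho, hno⟩ := h n r hd
    refine ⟨(openAt_extend_of_le (by omega) (by omega)).2 ho, ?_⟩
    rintro ⟨r', h₁, h₂, h₃, h₄⟩
    exact hno ⟨r', h₁, h₂, h₃, (openAt_extend_of_le (by omega) (by omega)).1 h₄⟩
  · refine ⟨(openAt_extend_of_le le_rfl href.le).2 ⟨?_, ?_⟩, by omega⟩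
    · obtain ⟨a, -, ha, haa, -⟩ := hm.2.2.2 hf
      exact ⟨a, ha, haa⟩
    · rintro ⟨j, -, hj⟩
      have := hj.ref_lt hP
      have := hj.le_length
      omega

theorem D12.extend_of_ref_last (h : D12 d) (hP : ParticleOK d)
    (href : m.ref = d.moves.length) : D12 (d.extend m) := by
  have hold : ∀ {n}, IsDefenseOf d n m.ref → False := fun hd => by
    have := hd.ref_lt hP
    have := hd.le_length
    omega
  intro n₁ n₂ r h₁ h₂
  rcases isDefenseOf_extend.1 h₁ with h₁ | ⟨rfl, -, rfl⟩ <;>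
    rcases isDefenseOf_extend.1 h₂ with h₂ | ⟨rfl, -, h₂r⟩
  · exact h n₁ n₂ r h₁ h₂
  · exact (hold (h₂r ▸ h₁)).elim
  · exact (hold h₂).elim
  · rfl

theorem D13.extend_of_ref_last (h : D13 d) (hP : ParticleOK d)
    (href : m.ref = d.moves.length) : D13 (d.extend m) := by
  have hold : ∀ {n}, IsAttackOn d n m.ref → False := fun ha => by
    have := ha.ref_lt hP
    have := ha.le_length
    omega
  intro n₁ n₂ r hr h₁ h₂
  rcases isAttackOn_extend.1 h₁ with h₁ | ⟨rfl, -, rfl⟩ <;>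
    rcases isAttackOn_extend.1 h₂ with h₂ | ⟨rfl, -, h₂r⟩
  · exact h n₁ n₂ r hr h₁ h₂
  · exact (hold (h₂r ▸ h₁)).elim
  · exact (hold h₂).elim
  · rfl

theorem ERule.extend_of_ref_last (h : ERule d) (href : m.ref = d.moves.length) :
    ERule (d.extend m) := by
  intro n mv hodd hmv
  rw [moveAt_extend] at hmv
  split_ifs at hmv with hn
  · cases hmv
    omega
  · exact h n mv hodd hmv

end Legality

theorem legalExt_of_ref_last {d : Dialogue} {m : Move} (hL : Legal rulesetEprime d)
    (hn : d.moves.length % 2 = 0) (href : m.ref = d.moves.length)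
    (hm : MoveOK d (d.moves.length + 1) m) : LegalExt rulesetEprime d m := by
  obtain ⟨hP, hD10, hD11, hD12, hD13, hE⟩ := hL
  exact ⟨hP.extend hm, hD10.extend_oMove hn, hD11.extend_of_ref_last hP href hm,
    hD12.extend_of_ref_last hP href, hD13.extend_of_ref_last hP href,
    hE.extend_of_ref_last href⟩

def HasFocus (d : Dialogue) : Focus → Prop
  | .free => PTurn d
  | .asserted ψ => ¬ PTurn d ∧ d.stmtAt d.moves.length = some (.form ψ)
  | .attacked χ st => ¬ PTurn d ∧ Attacks st χ ∧ ∃ atk, d.moveAt d.moves.length = some atk ∧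
      atk.isAttack = true ∧ atk.statement = st ∧ d.stmtAt atk.ref = some (.form χ)

def Simulated (d : Dialogue) : Prop :=
  ∀ f, HasFocus d f → AbsWin (oAssertions d) (goalStack d) f

theorem Defends.exists_eq_form {χ : Formula} {a s : Statement} (h : Defends χ a s) :
    ∃ ψ, s = .form ψ := by
  cases h <;> exact ⟨_, rfl⟩

section Simulation

variable {d : Dialogue}

theorem pTurn_extend_of_even {m : Move} (hn : d.moves.length % 2 = 0) : PTurn (d.extend m) := by
  simp only [pTurn_iff, extend_moves_length]
  omega

theorem AbsWin.of_oAttack (hL : Legal rulesetEprime d)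
    (hn : d.moves.length % 2 = 0) (hnext : ∀ m, LegalExt rulesetEprime d m → Simulated (d.extend m))
    {ψ : Formula} {st : Statement}
    (hst : d.stmtAt d.moves.length = some (.form ψ)) (hatt : Attacks st ψ) :
    AbsWin (st.formula?.toList ++ oAssertions d) (defenceGoal st (some (.form ψ)) :: goalStack d)
      .free := by
  have hleg : LegalExt rulesetEprime d ⟨st, true, d.moves.length⟩ :=
    legalExt_of_ref_last hL hn rfl
      ⟨Nat.lt_succ_self _, by dsimp only; omega, fun _ => ⟨ψ, hst, hatt⟩,
        fun h => by simp at h⟩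
  have := hnext _ hleg .free (pTurn_extend_of_even hn)
  rwa [oAssertions_extend, if_pos hn, goalStack_extend_oAttack hL.1 le_rfl hn rfl, hst] at this

theorem AbsWin.of_oDefence (hL : Legal rulesetEprime d)
    (hn : d.moves.length % 2 = 0) (hnext : ∀ m, LegalExt rulesetEprime d m → Simulated (d.extend m))
    {δ χ : Formula} {atk : Move}
    (ha : d.moveAt d.moves.length = some atk) (hatk : atk.isAttack = true)
    (hχ : d.stmtAt atk.ref = some (.form χ)) (hdef : Defends χ atk.statement (.form δ)) :
    AbsWin (δ :: oAssertions d) (goalStack d) .free := by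
  have hleg : LegalExt rulesetEprime d ⟨.form δ, false, d.moves.length⟩ :=
    legalExt_of_ref_last hL hn rfl
      ⟨Nat.lt_succ_self _, by dsimp only; omega, fun h => by simp at h,
        fun _ => ⟨atk, χ, ha, hatk, hχ, hdef⟩⟩
  have := hnext _ hleg .free (pTurn_extend_of_even hn)
  rwa [oAssertions_extend, if_pos hn,
    goalStack_extend_eq_self hL.1 le_rfl (by simp) fun _ => hn] at this

theorem AbsWin.of_asserted (hL : Legal rulesetEprime d)
    (hn : d.moves.length % 2 = 0) (hnext : ∀ m, LegalExt rulesetEprime d m → Simulated (d.extend m))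
    {ψ : Formula} (hst : d.stmtAt d.moves.length = some (.form ψ)) :
    AbsWin (oAssertions d) (goalStack d) (.asserted ψ) := by
  refine .assert (fun q hq => ?_) fun st hatt => .of_oAttack hL hn hnext hst hatt
  subst hq
  obtain ⟨j, -, hj, hj'⟩ := hL.2.1 _ q hn hst
  exact hj'.imp (mem_oAssertions hj) (mem_oAssertions hj)

theorem AbsWin.of_attacked (hL : Legal rulesetEprime d)
    (hn : d.moves.length % 2 = 0) (hnext : ∀ m, LegalExt rulesetEprime d m → Simulated (d.extend m))
    {χ : Formula} {st : Statement} (hatt : Attacks st χ) {atk : Move}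
    (ha : d.moveAt d.moves.length = some atk) (hatk : atk.isAttack = true)
    (hst : atk.statement = st) (hχ : d.stmtAt atk.ref = some (.form χ)) :
    AbsWin (oAssertions d) (goalStack d) (.attacked χ st) := by
  subst hst
  refine .respond hatt (fun a h => .of_asserted hL hn hnext ?_) fun δ hdef =>
    .of_oDefence hL hn hnext ha hatk hχ hdef
  rw [stmtAt_of_moveAt ha, h]

end Simulation

theorem Simulated.of_oMoves {d : Dialogue} (hL : Legal rulesetEprime d) (hturn : ¬ PTurn d)
    (hnext : ∀ m, LegalExt rulesetEprime d m → Simulated (d.extend m)) : Simulated d := by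
  have hn : d.moves.length % 2 = 0 := by
    rw [pTurn_iff] at hturn
    omega
  rintro (_ | ψ | ⟨χ, st⟩) hf
  · exact absurd hf hturn
  · exact .of_asserted hL hn hnext hf.2
  · obtain ⟨-, hatt, atk, ha, hatk, hst, hχ⟩ := hf
    exact .of_attacked hL hn hnext hatt ha hatk hst hχ

theorem oAssertions_extend_pMove {d : Dialogue} {m : Move} (hn : d.moves.length % 2 = 1) :
    oAssertions (d.extend m) = oAssertions d := by
  rw [oAssertions_extend, if_neg (by omega), List.nil_append]

theorem openOAttacks_eq_cons_of_answer {d : Dialogue} {m : Move} (hD11 : D11 (d.extend m))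
    (href : m.ref ≤ d.moves.length) (hodd : m.ref % 2 = 1)
    (hdef : IsDefenseOf (d.extend m) (d.moves.length + 1) m.ref) :
    ∃ rest, openOAttacks d = m.ref :: rest := by
  obtain ⟨hopen, hlatest⟩ := hD11 _ _ hdef
  refine exists_eq_cons_of_pairwise_gt (openOAttacks_sorted d)
    (mem_openOAttacks.2 ⟨href, hodd, (openAt_extend_of_le le_rfl href).1 hopen⟩) fun r hr => ?_
  obtain ⟨hr₁, hr₂, hr₃⟩ := mem_openOAttacks.1 hr
  by_contra hlt
  exact hlatest ⟨r, by omega, by omega, by omega, (openAt_extend_of_le le_rfl hr₁).2 hr₃⟩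

theorem AbsWin.of_pAttack {d : Dialogue} {m : Move} (hP : ParticleOK d)
    (hn : d.moves.length % 2 = 1) (hatk : m.isAttack = true)
    (hm : MoveOK (d.extend m) (d.moves.length + 1) m) (ih : Simulated (d.extend m)) :
    AbsWin (oAssertions d) (goalStack d) .free := by
  obtain ⟨hlt, hpar, hA, -⟩ := hm
  obtain ⟨χ, hχ, hatt⟩ := hA hatk
  have href : m.ref ≤ d.moves.length := by omega
  have hχd : d.stmtAt m.ref = some (.form χ) := by rwa [stmtAt_extend_of_le href] at hχ
  have hf : HasFocus (d.extend m) (.attacked χ m.statement) :=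
    ⟨by simp only [pTurn_iff, extend_moves_length]; omega, hatt, m,
      by rw [extend_moves_length, moveAt_extend_self], hatk, rfl, hχ⟩
  have hwin := ih _ hf
  rw [oAssertions_extend_pMove hn,
    goalStack_extend_eq_self hP href (fun h => absurd h.1 (by omega)) (by simp [hatk])] at hwin
  exact .attack (mem_oAssertions (by omega) hχd) hwin

theorem AbsWin.of_pDefence {d : Dialogue} {m : Move} (hP : ParticleOK d)
    (hn : d.moves.length % 2 = 1) (hdef : m.isAttack = false)
    (hm : MoveOK (d.extend m) (d.moves.length + 1) m) (hD11 : D11 (d.extend m))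
    (ih : Simulated (d.extend m)) :
    AbsWin (oAssertions d) (goalStack d) .free := by
  obtain ⟨hlt, hpar, -, hD⟩ := hm
  obtain ⟨atk, χ, ha, hatk, hχ, hdefends⟩ := hD hdef
  have href : m.ref ≤ d.moves.length := by omega
  rw [moveAt_extend_of_le href] at ha
  rw [stmtAt_extend_of_le ((hP.ref_lt ha).le.trans href)] at hχ
  obtain ⟨rest, htop⟩ := openOAttacks_eq_cons_of_answer hD11 href (by omega)
    ⟨m, moveAt_extend_self, hdef, rfl⟩
  obtain ⟨ψ, hψ⟩ := hdefends.exists_eq_form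
  have hf : HasFocus (d.extend m) (.asserted ψ) :=
    ⟨by simp only [pTurn_iff, extend_moves_length]; omega,
      by rw [extend_moves_length, stmtAt_extend_self, hψ]⟩
  have hwin := ih _ hf
  rw [oAssertions_extend_pMove hn] at hwin
  rw [goalStack_eq_cons_extend_answer hP hn hdef htop, attackGoal_eq ha hχ]
  exact .defend (hψ ▸ hdefends) hwin

theorem Simulated.of_pMove {d : Dialogue} {m : Move} (hturn : PTurn d)
    (hm : LegalExt rulesetEprime d m) (ih : Simulated (d.extend m)) (hP : ParticleOK d) :
    Simulated d := by
  have hn := pTurn_iff.1 hturn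
  rintro (_ | ψ | ⟨χ, st⟩) hf
  · cases hatk : m.isAttack
    · exact .of_pDefence hP hn hatk hm.1.moveOK_last hm.2.2.1 ih
    · exact .of_pAttack hP hn hatk hm.1.moveOK_last ih
  · exact absurd hturn hf.1
  · exact absurd hturn hf.1

theorem Simulated.of_pWinning {d : Dialogue} (hw : PWinning rulesetEprime d)
    (hL : Legal rulesetEprime d) : Simulated d := by
  induction hw with
  | pMove d m hturn hm _ _ ih => exact .of_pMove hturn hm (ih hm) hL.1
  | oMoves d hturn _ ih => exact .of_oMoves hL hturn fun m hm => ih m hm hm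

theorem stableProv_of_valid {φ : Formula} (h : valid rulesetEprime φ) : StableProv φ :=
  (Simulated.of_pWinning h.2 h.1 (.asserted φ) ⟨by simp [pTurn_iff], rfl⟩).sound

/-- If φ is E′-valid and p₁, …, pₙ lists all the atoms occurring in φ, then
((¬¬p₁ → p₁) ∧ … ∧ (¬¬pₙ → pₙ)) → φ is intuitionistically valid. -/
theorem Eprime_valid_reduces_to_IL_all_atoms (φ : Formula) (p : ℕ)
    (ps : List ℕ) (h : valid rulesetEprime φ)
    (hatoms : ∀ q, q ∈ φ.atoms ↔ q ∈ p :: ps) :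
    IProv (.imp (stabConj p ps) φ) := by
  have key := (stableProv_of_valid h).iProv_stabConj_imp_subst p ps
  rwa [Formula.subst_eq_self (σ := keepAtoms _) fun q hq => if_pos ((hatoms q).1 hq)] at key

end LorenzenDialogues
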